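/- On the Lie algebra A_{6,71}^{-3/2} with structure equations ((3/2)e^{16}+e^{25}, (1/2)e^{26}+e^{35}, -(1/2)e^{36}+e^{45}, -(3/2)e^{46}, e^{56}, 0), the pair F = e^{41} + e^{23} + 2e^{56} and ρ = -e^{245} + 2e^{346} - 2e^{126} - e^{135} satisfies dF = 0, dρ = 0, F^3 ≠ 0, and F∧ρ = 0. -/

import Mathlib

/-! Expanding the products and sorting the basis 1-forms by anticommutation reduces `dF`, `dρ`
and `F ∧ ρ` to zero and `F³` to `-12 e¹²³⁴⁵⁶`. The top form `e¹²³⁴⁵⁶` is nonzero because the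
determinant, as an alternating form, extends to the exterior algebra and takes the value `1`
on it. -/

open ExteriorAlgebra

noncomputable section

/-- The exterior algebra Λ*(g*) of a 6-dimensional real Lie algebra g,
    identified with the exterior algebra on ℝ^6. -/
abbrev E6 : Type := ExteriorAlgebra ℝ (Fin 6 → ℝ)

/-- The basis 1-forms e^1, ..., e^6 (0-indexed). -/
def e (i : Fin 6) : E6 := ι ℝ (Pi.single i 1)

/-- Structure equations: d of the basis 1-forms. -/
def d1 : Fin 6 → E6 :=
  ![((3:ℝ)/2) • (e 0 * e 5) + e 1 * e 4,
    ((1:ℝ)/2) • (e 1 * e 5) + e 2 * e 4,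
    ((-1:ℝ)/2) • (e 2 * e 5) + e 3 * e 4,
    ((-3:ℝ)/2) • (e 3 * e 5),
    e 4 * e 5,
    0]

/-- Leibniz: d(e^i ∧ e^j) = de^i ∧ e^j - e^i ∧ de^j. -/
def d2 (i j : Fin 6) : E6 := d1 i * e j - e i * d1 j

/-- Leibniz: d(e^i ∧ e^j ∧ e^k) = de^i ∧ e^j ∧ e^k - e^i ∧ de^j ∧ e^k + e^i ∧ e^j ∧ de^k. -/
def d3 (i j k : Fin 6) : E6 := d1 i * e j * e k - e i * d1 j * e k + e i * e j * d1 k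

/-- F. -/
def F : E6 := e 3 * e 0 + e 1 * e 2 + (2:ℝ) • (e 4 * e 5)

/-- dF via the Leibniz rule. -/
def dF : E6 := d2 3 0 + d2 1 2 + (2:ℝ) • (d2 4 5)

/-- ρ. -/
def ρ : E6 := -e 1 * e 3 * e 4 + (2:ℝ) • (e 2 * e 3 * e 5) + (-2:ℝ) • (e 0 * e 1 * e 5) - e 0 * e 2 * e 4

/-- dρ via the Leibniz rule. -/
def dρ : E6 := -d3 1 3 4 + (2:ℝ) • (d3 2 3 5) + (-2:ℝ) • (d3 0 1 5) - d3 0 2 4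


namespace ExteriorAlgebra

theorem ιMulti_basis_ne_zero {R M : Type*} [CommRing R] [Nontrivial R] [AddCommGroup M]
    [Module R M] {n : ℕ} (b : Module.Basis (Fin n) R M) : ιMulti R n b ≠ 0 := by
  intro h
  have := congrArg (liftAlternating fun k =>
    if hk : n = k then b.det.domDomCongr (finCongr hk) else 0) h
  simp [liftAlternating_apply_ιMulti, Module.Basis.det_self] at this

end ExteriorAlgebra

/-- Oriented by `j < i`, so that simp sorts products of basis forms into increasing order. -/
lemma e_mul_e_of_lt {i j : Fin 6} (_ : j < i) : e i * e j = -(e j * e i) :=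
  eq_neg_of_add_eq_zero_left (ι_add_mul_swap _ _)

lemma e_mul_e_mul_of_lt {i j : Fin 6} (x : E6) (h : j < i) :
    e i * (e j * x) = -(e j * (e i * x)) := by
  rw [← mul_assoc, e_mul_e_of_lt h, neg_mul, mul_assoc]

lemma e_mul_self (i : Fin 6) : e i * e i = 0 := ι_sq_zero _

lemma e_mul_e_mul_self (i : Fin 6) (x : E6) : e i * (e i * x) = 0 := by
  rw [← mul_assoc, e_mul_self, zero_mul]

lemma e_top_ne_zero : e 0 * (e 1 * (e 2 * (e 3 * (e 4 * e 5)))) ≠ 0 := by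
  simpa [ιMulti_apply, List.ofFn_succ, e, Pi.basisFun_apply, Matrix.vecTail] using
    ιMulti_basis_ne_zero (Pi.basisFun ℝ (Fin 6))

lemma dF_eq_zero : dF = 0 := by
  simp +decide only [dF, d2, d1, Matrix.cons_val, mul_add, add_mul, mul_assoc, mul_neg,
    smul_mul_assoc, mul_smul_comm, mul_zero, e_mul_e_of_lt, e_mul_e_mul_of_lt, e_mul_self,
    e_mul_e_mul_self]
  module

lemma dρ_eq_zero : dρ = 0 := by
  simp +decide only [dρ, d3, d1, Matrix.cons_val, mul_add, add_mul, mul_assoc, neg_mul, mul_neg,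
    smul_mul_assoc, mul_smul_comm, mul_zero, zero_mul, e_mul_e_of_lt, e_mul_self, e_mul_e_mul_self]
  module

lemma F_mul_ρ : F * ρ = 0 := by
  simp +decide only [F, ρ, mul_add, add_mul, mul_sub, mul_assoc, neg_mul, mul_neg,
    smul_mul_assoc, mul_smul_comm, mul_zero, e_mul_e_of_lt, e_mul_e_mul_of_lt, e_mul_self,
    e_mul_e_mul_self]
  module

lemma F_mul_F_mul_F : F * F * F = (-12 : ℝ) • (e 0 * (e 1 * (e 2 * (e 3 * (e 4 * e 5))))) := by
  simp +decide only [F, mul_add, add_mul, mul_assoc, neg_mul, mul_neg, smul_mul_assoc,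
    mul_smul_comm, mul_zero, zero_mul, e_mul_e_of_lt, e_mul_e_mul_of_lt, e_mul_self,
    e_mul_e_mul_self]
  module

/-- Symplectic half-flat structure on A_{6,71}^{-3/2}. -/
theorem stmt13 : dF = 0 ∧ dρ = 0 ∧ F * F * F ≠ 0 ∧ F * ρ = 0 := by
  refine ⟨dF_eq_zero, dρ_eq_zero, ?_, F_mul_ρ⟩
  rw [F_mul_F_mul_F]
  exact smul_ne_zero (by norm_num) e_top_ne_zero
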